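/- arXiv:1912.12415 — 2 statements merged into one kernel-verified Lean document; each statement's English description precedes it below -/
import Mathlib

section
/- Let G be a group and let α and β be tensor commuting automorphisms of G. Then the composite α ∘ β is a tensor commuting automorphism of G if and only if α(x) ⊗ β(x) = 1_⊗ for all x ∈ G. -/
/-!
Non-abelian tensor square `G ⊗ G`, constructed as the presented group on
symbols `g ⊗ h` with the defining relations
`g*g' ⊗ h = (g^{g'} ⊗ h^{g'}) * (g' ⊗ h)` and
`g ⊗ h*h' = (g ⊗ h') * (g^{h'} ⊗ h^{h'})`, where `a ^ b = b⁻¹ * a * b`.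
-/

variable {G : Type*} [Group G]

/-- Defining relations of the non-abelian tensor square `G ⊗ G`. -/
def tensorRels (G : Type*) [Group G] : Set (FreeGroup (G × G)) :=
  {r | (∃ g g' h : G,
      r = FreeGroup.of (g * g', h) *
        (FreeGroup.of (g'⁻¹ * g * g', g'⁻¹ * h * g') * FreeGroup.of (g', h))⁻¹) ∨
    (∃ g h h' : G,
      r = FreeGroup.of (g, h * h') *
        (FreeGroup.of (g, h') * FreeGroup.of (h'⁻¹ * g * h', h'⁻¹ * h * h'))⁻¹)}

/-- The non-abelian tensor square `G ⊗ G`. -/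
abbrev TensorSquare (G : Type*) [Group G] := PresentedGroup (tensorRels G)

/-- The tensor `g ⊗ h` as an element of `G ⊗ G`. -/
def tmul (g h : G) : TensorSquare G := PresentedGroup.of (g, h)

theorem tensorRels_eq_one {r : FreeGroup (G × G)} (hr : r ∈ tensorRels G) :
    PresentedGroup.mk (tensorRels G) r = 1 :=
  (QuotientGroup.eq_one_iff r).mpr (Subgroup.subset_normalClosure hr)

/-- The first defining relation of `G ⊗ G`. -/
theorem tmul_rel₁ (g g' h : G) :
    tmul (g * g') h = tmul (g'⁻¹ * g * g') (g'⁻¹ * h * g') * tmul g' h := by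
  have h1 := tensorRels_eq_one (G := G) (Or.inl ⟨g, g', h, rfl⟩)
  rw [map_mul, map_inv, map_mul, mul_inv_eq_one] at h1
  exact h1

/-- The second defining relation of `G ⊗ G`. -/
theorem tmul_rel₂ (g h h' : G) :
    tmul g (h * h') = tmul g h' * tmul (h'⁻¹ * g * h') (h'⁻¹ * h * h') := by
  have h1 := tensorRels_eq_one (G := G) (Or.inr ⟨g, h, h', rfl⟩)
  rw [map_mul, map_inv, map_mul, mul_inv_eq_one] at h1
  exact h1

/-- The action of `x : G` on `G ⊗ G`, determined by `(g ⊗ h) ^ x = (x⁻¹*g*x) ⊗ (x⁻¹*h*x)`. -/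
def tensorAct (x : G) : TensorSquare G →* TensorSquare G :=
  PresentedGroup.toGroup
    (f := fun p : G × G => tmul (x⁻¹ * p.1 * x) (x⁻¹ * p.2 * x))
    (by
      rintro r (⟨g, g', h, rfl⟩ | ⟨g, h, h', rfl⟩) <;>
        simp only [map_mul, map_inv, FreeGroup.lift_apply_of, mul_inv_eq_one]
      · have := tmul_rel₁ (x⁻¹ * g * x) (x⁻¹ * g' * x) (x⁻¹ * h * x)
        convert this using 2 <;> group
      · have := tmul_rel₂ (x⁻¹ * g * x) (x⁻¹ * h * x) (x⁻¹ * h' * x)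
        convert this using 2 <;> group)

@[simp] theorem tensorAct_tmul (x g h : G) :
    tensorAct x (tmul g h) = tmul (x⁻¹ * g * x) (x⁻¹ * h * x) :=
  PresentedGroup.toGroup.of _

/-- An automorphism `α` of `G` is tensor commuting if `g ⊗ α g = 1` for all `g`. -/
def IsTensorCommuting (α : G ≃* G) : Prop := ∀ g : G, tmul g (α g) = 1

/-- An automorphism `α` of `G` is tensor central if `[x, α] = x⁻¹ * α x` lies in the
tensor center of `G`, i.e. `(x⁻¹ * α x) ⊗ y = 1` for all `x y`. -/
def IsTensorCentral (α : G ≃* G) : Prop := ∀ x y : G, tmul (x⁻¹ * α x) y = 1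

/-- The inner automorphism `T_g : x ↦ x ^ g = g⁻¹ * x * g` of `G` induced by `g`. -/
def innerAut (g : G) : G ≃* G := MulAut.conj g⁻¹

/-- The commutator map `κ : G ⊗ G →* G`, `g ⊗ h ↦ g⁻¹ h⁻¹ g h`. -/
def tensorCommutatorHom : TensorSquare G →* G :=
  PresentedGroup.toGroup (f := fun p : G × G => p.1⁻¹ * p.2⁻¹ * p.1 * p.2) (by
    rintro r (⟨g, g', h, rfl⟩ | ⟨g, h, h', rfl⟩) <;>
      simp only [map_mul, map_inv, FreeGroup.lift_apply_of, mul_inv_eq_one] <;> group)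

@[simp] theorem tensorCommutatorHom_tmul (g h : G) :
    tensorCommutatorHom (tmul g h) = g⁻¹ * h⁻¹ * g * h :=
  PresentedGroup.toGroup.of _

theorem commute_of_tmul_eq_one {g h : G} (h1 : tmul g h = 1) : Commute g h := by
  have hκ : g⁻¹ * h⁻¹ * g * h = 1 := by
    rw [← tensorCommutatorHom_tmul, h1, map_one]
  calc g * h = h * g * (g⁻¹ * h⁻¹ * g * h) := by group
    _ = h * g := by rw [hκ, mul_one]

def tensorSwap : TensorSquare G →* TensorSquare G :=
  PresentedGroup.toGroup (f := fun p : G × G => (tmul p.2 p.1)⁻¹) (by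
    rintro r (⟨g, g', h, rfl⟩ | ⟨g, h, h', rfl⟩) <;>
      simp only [map_mul, map_inv, FreeGroup.lift_apply_of, inv_inv, mul_inv_rev]
    · rw [← tmul_rel₂ h g g', inv_mul_cancel]
    · rw [← tmul_rel₁ h h' g, inv_mul_cancel])

@[simp] theorem tensorSwap_tmul (g h : G) : tensorSwap (tmul g h) = (tmul h g)⁻¹ :=
  PresentedGroup.toGroup.of _

theorem tmul_eq_one_comm {g h : G} : tmul g h = 1 ↔ tmul h g = 1 := by
  have swap : ∀ {a b : G}, tmul a b = 1 → tmul b a = 1 := fun h1 => by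
    rw [← inv_eq_one, ← tensorSwap_tmul, h1, map_one]
  exact ⟨swap, swap⟩

theorem tmul_conj_eq_one {g h : G} (x : G) (h1 : tmul g h = 1) :
    tmul (x⁻¹ * g * x) (x⁻¹ * h * x) = 1 := by
  rw [← tensorAct_tmul, h1, map_one]

namespace IsTensorCommuting

variable {α : G ≃* G}

/- Expanding `1 = uv ⊗ α(uv)` with both defining relations, every factor except `v ⊗ α u`
vanishes once `α v` is known to centralise `u` and `v`. -/
theorem tmul_eq_one_swap_of_commute (hα : IsTensorCommuting α) {u v : G} (huv : Commute u v)
    (h1 : tmul u (α v) = 1) : tmul v (α u) = 1 := by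
  have hv : Commute v (α v) := commute_of_tmul_eq_one (hα v)
  have hu : Commute u (α v) := commute_of_tmul_eq_one h1
  have hconj_uv : (α v)⁻¹ * (u * v) * α v = u * v := ((hu.mul_left hv).symm).inv_mul_cancel
  have hconj_αu : (α v)⁻¹ * α u * α v = α u := (huv.map α).symm.inv_mul_cancel
  have expand := hα (u * v)
  rw [map_mul, tmul_rel₂, hconj_uv, hconj_αu, tmul_rel₁ u v (α v), tmul_conj_eq_one v h1,
    hα v, tmul_rel₁ u v (α u), tmul_conj_eq_one v (hα u)] at expand
  simpa using expand

theorem tmul_eq_one_comm_of_commute (hα : IsTensorCommuting α) {u v : G} (huv : Commute u v) :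
    tmul u (α v) = 1 ↔ tmul v (α u) = 1 :=
  ⟨hα.tmul_eq_one_swap_of_commute huv, hα.tmul_eq_one_swap_of_commute huv.symm⟩

end IsTensorCommuting

/-- If `α, β` are tensor commuting automorphisms of `G`, then `α ∘ β` is tensor commuting
iff `α x ⊗ β x = 1` for all `x ∈ G`. -/
theorem stmt_5 (G : Type*) [Group G] (α β : G ≃* G)
    (hα : IsTensorCommuting α) (hβ : IsTensorCommuting β) :
    IsTensorCommuting (α * β) ↔ ∀ x : G, tmul (α x) (β x) = 1 :=
  forall_congr' fun x => by
    rw [MulAut.mul_apply, hα.tmul_eq_one_comm_of_commute (commute_of_tmul_eq_one (hβ x)),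
      tmul_eq_one_comm]
end

section
/- Let G be a group such that x ⊗ x = 1_⊗ for all x ∈ G, let g ∈ G, and let T_g be the inner automorphism of G induced by g (so T_g(x) = x^g = g⁻¹xg). Then T_g is a tensor commuting automorphism of G if and only if g ∈ R_2^⊗(G). -/
/-!
Non-abelian tensor square `G ⊗ G`, constructed as the presented group on
symbols `g ⊗ h` with the defining relations
`g*g' ⊗ h = (g^{g'} ⊗ h^{g'}) * (g' ⊗ h)` and
`g ⊗ h*h' = (g ⊗ h') * (g^{h'} ⊗ h^{h'})`, where `a ^ b = b⁻¹ * a * b`.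
-/

variable {G : Type*} [Group G]

/-!
Write `T_g x = x * c` with `c = [x, g]`. By the second relation and `x^c ⊗ x^c = 1`,
`x ⊗ T_g x = x ⊗ c`. When every `y ⊗ y` is trivial, `a ⊗ b` and `b ⊗ a` are mutually inverse,
so `x ⊗ c = 1` iff `c ⊗ x = 1`; and `c⁻¹ ⊗ x` is the inverse of a conjugate of `c ⊗ x` under the
action of `G`, so this holds iff `[g, x] ⊗ x = c⁻¹ ⊗ x = 1`.
-/

theorem tmul_one_left (h : G) : tmul (1 : G) h = 1 := by
  have h₁ := tmul_rel₁ (1 : G) 1 h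
  simp only [mul_one, inv_one, one_mul] at h₁
  exact left_eq_mul.mp h₁

theorem tensorAct_one : tensorAct (1 : G) = MonoidHom.id _ :=
  PresentedGroup.ext fun ⟨g, h⟩ => by
    change tensorAct 1 (tmul g h) = tmul g h
    simp only [tensorAct_tmul, inv_one, one_mul, mul_one]

theorem tensorAct_tensorAct (x y : G) (t : TensorSquare G) :
    tensorAct y (tensorAct x t) = tensorAct (x * y) t := by
  suffices (tensorAct y).comp (tensorAct x) = tensorAct (x * y) from DFunLike.congr_fun this t
  refine PresentedGroup.ext fun ⟨g, h⟩ => ?_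
  change tensorAct y (tensorAct x (tmul g h)) = tensorAct (x * y) (tmul g h)
  simp only [tensorAct_tmul, mul_inv_rev, mul_assoc]

theorem tensorAct_eq_one_iff (x : G) {t : TensorSquare G} : tensorAct x t = 1 ↔ t = 1 := by
  refine ⟨fun ht => ?_, fun ht => by rw [ht, map_one]⟩
  rw [← MonoidHom.id_apply _ t, ← tensorAct_one, ← mul_inv_cancel x, ← tensorAct_tensorAct, ht,
    map_one]

theorem tmul_inv_left (a h : G) : tmul a⁻¹ h = (tensorAct a⁻¹ (tmul a h))⁻¹ := by
  have h₁ := tmul_rel₁ a a⁻¹ h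
  rw [mul_inv_cancel, tmul_one_left, inv_inv, eq_comm, mul_eq_one_iff_inv_eq, eq_comm] at h₁
  simpa only [tensorAct_tmul, inv_inv] using h₁

theorem tmul_inv_left_eq_one_iff (a h : G) : tmul a⁻¹ h = 1 ↔ tmul a h = 1 := by
  rw [tmul_inv_left, inv_eq_one, tensorAct_eq_one_iff]

/-- Expand `(b * a) ⊗ (b * a) = 1` by both defining relations. -/
theorem tmul_mul_tmul_swap (hsq : ∀ x : G, tmul x x = 1) (a b : G) :
    tmul a b * tmul b a = 1 := by
  have hab : tmul (b * a) b = tmul a b := by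
    simpa only [mul_assoc, inv_mul_cancel, mul_one, inv_mul_cancel_left, one_mul, hsq] using
      tmul_rel₁ (b * a * b⁻¹) b b
  have hba : tmul (a * b) a = tmul b a := by
    simpa only [hsq, one_mul] using tmul_rel₁ a b a
  calc tmul a b * tmul b a
      = tmul (b * a) b * tmul (a * b) a := by rw [hab, hba]
    _ = tmul (b * a) (b * a * b⁻¹ * b) := by
        simpa only [mul_assoc, inv_mul_cancel, mul_one, inv_mul_cancel_left] using
          (tmul_rel₂ (b * a) (b * a * b⁻¹) b).symm
    _ = 1 := by rw [inv_mul_cancel_right, hsq]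

theorem tmul_comm_eq_one_iff (hsq : ∀ x : G, tmul x x = 1) (a b : G) :
    tmul a b = 1 ↔ tmul b a = 1 := by
  rw [eq_inv_of_mul_eq_one_right (tmul_mul_tmul_swap hsq a b), inv_eq_one]

theorem tmul_self_mul (hsq : ∀ x : G, tmul x x = 1) (x c : G) : tmul x (x * c) = tmul x c := by
  rw [tmul_rel₂, hsq, mul_one]

theorem innerAut_apply (g x : G) : innerAut g x = g⁻¹ * x * g := by
  simp only [innerAut, map_inv, MulAut.inv_apply, MulAut.conj_symm_apply]

/-- If `x ⊗ x = 1` for all `x ∈ G`, then the inner automorphism `T_g` is tensor commuting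
iff `g` is a right `2⊗`-Engel element, i.e. `[g, x] ⊗ x = 1` for all `x`. -/
theorem stmt_8 (G : Type*) [Group G] (hsq : ∀ x : G, tmul x x = 1) (g : G) :
    IsTensorCommuting (innerAut g) ↔ ∀ x : G, tmul (g⁻¹ * x⁻¹ * g * x) x = 1 := by
  refine forall_congr' fun x => ?_
  have hconj : innerAut g x = x * (g⁻¹ * x⁻¹ * g * x)⁻¹ := by
    rw [innerAut_apply]; group
  rw [hconj, tmul_self_mul hsq, tmul_comm_eq_one_iff hsq, tmul_inv_left_eq_one_iff]
end
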